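/- Assume D = 0 and Re(λ_i) > 0 for all i = 1,…,n (all poles are antistable). Define the reflected (stable) transfer function H⁻(s) := Σ_{i=1}^n (1/(s+λ_i))·φ_i. Then lim_{ω→+∞} ‖H‖²_{H2,ω} = lim_{ω→+∞} ‖H⁻‖²_{H2,ω}; that is, the limiting squared frequency-limited H2-norm of the antistable system equals the squared H2-norm of its stable reflection. -/

import Mathlib

/-!
Reflecting the poles gives `H⁻(s) = -H(-s)`, so the integrand of `‖H⁻‖²_{H2,ω}` at `ν` is
`tr(H(-iν) H(iν)ᵀ)`, which is the integrand of `‖H‖²_{H2,ω}` because a matrix and its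
transpose have the same trace. The two frequency-limited norms therefore agree for every `ω`,
and the common limit exists: since no pole lies on the imaginary axis, each term
`(iν - λᵢ)⁻¹ (-iν - λⱼ)⁻¹` of the integrand is continuous and `O(ν⁻²)`, hence integrable on `ℝ`.
-/

open Complex Matrix MeasureTheory intervalIntegral BigOperators

/-- Strictly proper transfer function `H(s) = Σᵢ (s − λᵢ)⁻¹ • φᵢ`. -/
noncomputable def transferH {n n_u n_y : ℕ} (lam : Fin n → ℂ)
    (φ : Fin n → Matrix (Fin n_y) (Fin n_u) ℂ) (s : ℂ) : Matrix (Fin n_y) (Fin n_u) ℂ :=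
  ∑ i, (s - lam i)⁻¹ • φ i

/-- Squared frequency-limited H2-norm:
`‖H‖²_{H2,ω} = (1/(2π)) ∫_{−ω}^{ω} tr(H(iν)·H(−iν)ᵀ) dν`. -/
noncomputable def h2wSq {n n_u n_y : ℕ} (lam : Fin n → ℂ)
    (φ : Fin n → Matrix (Fin n_y) (Fin n_u) ℂ) (ω : ℝ) : ℂ :=
  (2 * (Real.pi : ℂ))⁻¹ * ∫ ν : ℝ in (-ω)..ω,
    (transferH lam φ (Complex.I * (ν : ℂ)) *
      (transferH lam φ (-(Complex.I * (ν : ℂ))))ᵀ).trace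

open Filter Topology

lemma exists_mul_one_add_sq_le (r m : ℝ) (hr : r ≠ 0) :
    ∃ c > 0, ∀ ν : ℝ, c * (1 + ν ^ 2) ≤ r ^ 2 + (ν - m) ^ 2 := by
  refine ⟨r ^ 2 / (2 * (1 + r ^ 2 + 2 * m ^ 2)), by positivity, fun ν => ?_⟩
  rw [div_mul_eq_mul_div, div_le_iff₀ (by positivity)]
  nlinarith [mul_nonneg (sq_nonneg r) (sq_nonneg (ν - 2 * m)), sq_nonneg (r * m),
    sq_nonneg (r * (ν - m)), mul_nonneg (sq_nonneg m) (sq_nonneg (ν - m)), sq_nonneg (ν - m)]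

section PartialFractions

variable {a b : ℂ}

lemma normSq_I_mul_sub (a : ℂ) (ν : ℝ) :
    normSq (I * ν - a) = a.re ^ 2 + (ν - a.im) ^ 2 := by
  simp only [normSq_apply, sub_re, sub_im, mul_re, mul_im, I_re, I_im, ofReal_re, ofReal_im]
  ring

lemma I_mul_sub_ne_zero (ha : a.re ≠ 0) (ν : ℝ) : I * ν - a ≠ 0 := by
  intro h
  apply ha
  simpa using (congrArg re h).symm

lemma continuous_inv_I_mul_sub (ha : a.re ≠ 0) : Continuous fun ν : ℝ => (I * ν - a)⁻¹ :=
  ((continuous_const.mul continuous_ofReal).sub continuous_const).inv₀ (I_mul_sub_ne_zero ha)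

lemma exists_sq_norm_inv_I_mul_sub_le (ha : a.re ≠ 0) :
    ∃ C, ∀ ν : ℝ, ‖(I * ν - a)⁻¹‖ ^ 2 ≤ C * (1 + ν ^ 2)⁻¹ := by
  obtain ⟨c, hc, hbound⟩ := exists_mul_one_add_sq_le a.re a.im ha
  refine ⟨c⁻¹, fun ν => ?_⟩
  rw [norm_inv, inv_pow, Complex.sq_norm, normSq_I_mul_sub, ← mul_inv]
  exact inv_anti₀ (by positivity) (hbound ν)

lemma integrable_inv_I_mul_sub_mul_inv_neg_I_mul_sub (ha : a.re ≠ 0) (hb : b.re ≠ 0) :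
    Integrable fun ν : ℝ => (I * ν - a)⁻¹ * (-(I * ν) - b)⁻¹ := by
  have hreflect : ∀ ν : ℝ, -(I * ν) - b = I * ↑(-ν) - b := fun ν => by push_cast; ring
  simp_rw [hreflect]
  obtain ⟨C₁, h₁⟩ := exists_sq_norm_inv_I_mul_sub_le ha
  obtain ⟨C₂, h₂⟩ := exists_sq_norm_inv_I_mul_sub_le hb
  have hdecay : ∀ ν : ℝ, ‖(I * ν - a)⁻¹ * (I * ↑(-ν) - b)⁻¹‖ ≤ (C₁ + C₂) / 2 * (1 + ν ^ 2)⁻¹ := by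
    intro ν
    have hb' := h₂ (-ν)
    rw [neg_sq] at hb'
    rw [norm_mul]
    nlinarith [two_mul_le_add_sq ‖(I * ν - a)⁻¹‖ ‖(I * ↑(-ν) - b)⁻¹‖, h₁ ν]
  refine (integrable_inv_one_add_sq.const_mul _).mono' ?_ (ae_of_all _ hdecay)
  exact ((continuous_inv_I_mul_sub ha).mul
    ((continuous_inv_I_mul_sub hb).comp continuous_neg)).aestronglyMeasurable

end PartialFractions

section TransferFunction

variable {n n_u n_y : ℕ} (lam : Fin n → ℂ) (φ : Fin n → Matrix (Fin n_y) (Fin n_u) ℂ)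

lemma trace_transferH_mul_transpose (s t : ℂ) :
    (transferH lam φ s * (transferH lam φ t)ᵀ).trace
      = ∑ i, ∑ j, ((s - lam i)⁻¹ * (t - lam j)⁻¹) * (φ i * (φ j)ᵀ).trace := by
  simp only [transferH, transpose_sum, Matrix.sum_mul, Matrix.mul_sum, transpose_smul,
    Matrix.smul_mul, Matrix.mul_smul, trace_sum, trace_smul, smul_eq_mul, Finset.mul_sum]
  rw [Finset.sum_comm]
  exact Finset.sum_congr rfl fun i _ => Finset.sum_congr rfl fun j _ => by ring

lemma integrable_trace_transferH_mul_transpose (hre : ∀ i, (lam i).re ≠ 0) :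
    Integrable fun ν : ℝ =>
      (transferH lam φ (I * ν) * (transferH lam φ (-(I * ν)))ᵀ).trace := by
  simp_rw [trace_transferH_mul_transpose]
  exact integrable_finsetSum _ fun i _ => integrable_finsetSum _ fun j _ =>
    (integrable_inv_I_mul_sub_mul_inv_neg_I_mul_sub (hre i) (hre j)).mul_const _

lemma tendsto_h2wSq (hre : ∀ i, (lam i).re ≠ 0) :
    Tendsto (h2wSq lam φ) atTop (𝓝 ((2 * (Real.pi : ℂ))⁻¹ * ∫ ν : ℝ,
      (transferH lam φ (I * ν) * (transferH lam φ (-(I * ν)))ᵀ).trace)) :=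
  (intervalIntegral_tendsto_integral (integrable_trace_transferH_mul_transpose lam φ hre)
    tendsto_neg_atTop_atBot tendsto_id).const_mul _

lemma transferH_neg_poles (s : ℂ) :
    transferH (fun i => -lam i) φ s = -transferH lam φ (-s) := by
  simp only [transferH, ← Finset.sum_neg_distrib, ← neg_smul]
  refine Finset.sum_congr rfl fun i _ => ?_
  rw [show s - -lam i = -(-s - lam i) by ring, inv_neg]

lemma h2wSq_neg_poles : h2wSq (fun i => -lam i) φ = h2wSq lam φ := by
  funext ω
  unfold h2wSq
  congr 1
  refine integral_congr fun ν _ => ?_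
  simp only [transferH_neg_poles, neg_neg, transpose_neg, Matrix.neg_mul, Matrix.mul_neg]
  rw [← trace_transpose, transpose_mul, transpose_transpose]

end TransferFunction

open Filter Topology in
theorem stmt_5_general (n n_u n_y : ℕ)
    (lam : Fin n → ℂ)
    (φ : Fin n → Matrix (Fin n_y) (Fin n_u) ℂ)
    (hanti : ∀ i, 0 < (lam i).re) :
    ∃ L : ℂ,
      Tendsto (fun ω : ℝ => h2wSq lam φ ω) atTop (nhds L) ∧
      Tendsto (fun ω : ℝ => h2wSq (fun i => -lam i) φ ω) atTop (nhds L) := by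
  have hre : ∀ i, (lam i).re ≠ 0 := fun i => (hanti i).ne'
  refine ⟨_, tendsto_h2wSq lam φ hre, ?_⟩
  rw [h2wSq_neg_poles]
  exact tendsto_h2wSq lam φ hre

open Filter Topology in
theorem stmt_5 (n n_u n_y : ℕ) (hn : 0 < n) (hnu : 0 < n_u) (hny : 0 < n_y)
    (lam : Fin n → ℂ) (hdist : Function.Injective lam)
    (φ : Fin n → Matrix (Fin n_y) (Fin n_u) ℂ)
    (hanti : ∀ i, 0 < (lam i).re) :
    ∃ L : ℂ,
      Tendsto (fun ω : ℝ => h2wSq lam φ ω) atTop (nhds L) ∧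
      Tendsto (fun ω : ℝ => h2wSq (fun i => -lam i) φ ω) atTop (nhds L) :=
  stmt_5_general n n_u n_y lam φ hanti
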